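/- The double-parity set is independent in A_{n+2,n}: if two injective n-tuples from {1,...,n+2} both have missing-value pairs of opposite parity and both extend (missing values ordered even-then-odd) to even permutations, then they cannot differ in exactly one position. -/

import Mathlib

/-!
Let `π` and `τ` be the even extensions of `v` and `w`, and suppose `v`, `w` differ only at `j`.
Then `τ⁻¹ * π` is an even permutation supported in `{j, n, n + 1}` that moves `j`, hence a
3-cycle on these three positions. A 3-cycle sends `n` to `n + 1` or `n + 1` to `n`, so
`π n = τ (n + 1)` or `π (n + 1) = τ n`: an even value would equal an odd one.
-/

open Equiv Finset

namespace Equiv.Perm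

variable {α : Type*} [DecidableEq α] [Fintype α]

theorem apply_eq_or_apply_eq_of_sign_eq_one {σ : Perm α} {a b c : α} (hsign : sign σ = 1)
    (hsupp : σ.support ⊆ {a, b, c}) (hc : σ c ≠ c) : σ a = b ∨ σ b = a := by
  have hcard : #σ.support = 3 := by
    have hge : 2 ≤ #σ.support := two_le_card_support_of_ne_one fun h => hc (by simp [h])
    have hle : #σ.support ≤ 3 := (card_le_card hsupp).trans card_le_three
    have hne : #σ.support ≠ 2 := fun h => by
      simp [(card_support_eq_two.1 h).sign_eq] at hsign
    omega
  have hsupp_eq : σ.support = {a, b, c} :=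
    eq_of_subset_of_card_le hsupp (hcard ▸ card_le_three)
  have hab : a ≠ b := by
    rintro rfl
    have h3 : #({a, a, c} : Finset α) = 3 := hsupp_eq ▸ hcard
    have : #({a, a, c} : Finset α) ≤ 2 := by simpa using card_le_two
    omega
  have ha : a ∈ σ.support := by simp [hsupp_eq]
  have hb : b ∈ σ.support := by simp [hsupp_eq]
  have hσa := apply_mem_support.2 ha
  have hσb := apply_mem_support.2 hb
  rw [hsupp_eq] at hσa hσb
  have hσa_ne : σ a ≠ a := mem_support.1 ha
  have hσb_ne : σ b ≠ b := mem_support.1 hb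
  simp only [mem_insert, mem_singleton] at hσa hσb
  rcases hσa with h | h | hac
  · exact absurd h hσa_ne
  · exact Or.inl h
  rcases hσb with h | h | hbc
  · exact Or.inr h
  · exact absurd h hσb_ne
  · exact absurd (σ.injective (hac.trans hbc.symm)) hab

theorem apply_eq_or_apply_eq_of_sign_eq {π τ : Perm α} {a b c : α} (hsign : sign π = sign τ)
    (hagree : ∀ x, x ≠ a → x ≠ b → x ≠ c → π x = τ x) (hc : π c ≠ τ c) :
    π a = τ b ∨ π b = τ a := by
  have hfix : ∀ x, (τ⁻¹ * π) x = x ↔ π x = τ x := fun x => by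
    rw [mul_apply, inv_eq_iff_eq]
  have hσsign : sign (τ⁻¹ * π) = 1 := by
    rw [sign_mul, sign_inv, hsign, ← sq, Int.units_sq]
  have hsupp : (τ⁻¹ * π).support ⊆ {a, b, c} := by
    intro x hx
    by_contra hx'
    simp only [mem_insert, mem_singleton, not_or] at hx'
    exact mem_support.1 hx ((hfix x).2 (hagree x hx'.1 hx'.2.1 hx'.2.2))
  rcases apply_eq_or_apply_eq_of_sign_eq_one hσsign hsupp (mt (hfix c).1 hc) with h | h
  · exact Or.inl (inv_eq_iff_eq.1 h)
  · exact Or.inr (inv_eq_iff_eq.1 h)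

end Equiv.Perm

/-- The double-parity set is independent in `A_{n+2,n}`: if two injective
`n`-tuples from `{1,...,n+2}` each extend (appending first the even missing
value, then the odd missing value) to an even permutation of `{1,...,n+2}`,
then they cannot differ in exactly one position. -/
theorem double_parity_independent (n : ℕ) (v w : Fin n → Fin (n + 2))
    (hπ : ∃ π : Equiv.Perm (Fin (n + 2)),
      (∀ i : Fin n, π (Fin.castLE (by omega) i) = v i) ∧
      Even (π ⟨n, by omega⟩).val ∧ Odd (π ⟨n + 1, by omega⟩).val ∧
      Equiv.Perm.sign π = 1)
    (hτ : ∃ τ : Equiv.Perm (Fin (n + 2)),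
      (∀ i : Fin n, τ (Fin.castLE (by omega) i) = w i) ∧
      Even (τ ⟨n, by omega⟩).val ∧ Odd (τ ⟨n + 1, by omega⟩).val ∧
      Equiv.Perm.sign τ = 1) :
    ¬ ∃! i : Fin n, v i ≠ w i := by
  rintro ⟨j, hj, huniq⟩
  obtain ⟨π, hπv, hπa, hπb, hπs⟩ := hπ
  obtain ⟨τ, hτw, hτa, hτb, hτs⟩ := hτ
  have hagree : ∀ x : Fin (n + 2), x ≠ ⟨n, by omega⟩ → x ≠ ⟨n + 1, by omega⟩ →
      x ≠ Fin.castLE (by omega) j → π x = τ x := by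
    intro x hxa hxb hxj
    have hxn : (x : ℕ) < n := by
      have := Fin.val_ne_of_ne hxa
      have := Fin.val_ne_of_ne hxb
      simp only [ne_eq] at *
      omega
    have hx : x = Fin.castLE (by omega) ⟨x, hxn⟩ := rfl
    rw [hx, hπv, hτw]
    exact not_not.1 fun h => hxj (hx.trans (congrArg _ (huniq _ h)))
  have hdiffer : π (Fin.castLE (by omega) j) ≠ τ (Fin.castLE (by omega) j) := by
    rwa [hπv, hτw]
  rcases Perm.apply_eq_or_apply_eq_of_sign_eq (hπs.trans hτs.symm) hagree hdiffer with h | h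
  · exact Nat.not_even_iff_odd.2 hτb (h ▸ hπa)
  · exact Nat.not_even_iff_odd.2 hπb (h ▸ hτa)
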